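/- arXiv:2508.12950 — 2 statements merged into one kernel-verified Lean document; each statement's English description precedes it below -/
import Mathlib

section
/- Let d ≥ 1 be a natural number, let N ≥ 1, and let x_0 < x_1 < ⋯ < x_N be real numbers. Define B_i : ℝ → ℝ by B_i(x) = (max (x_i − x) 0)^d for i = 1, …, N. If c_1, …, c_N are real numbers with Σ_{i=1}^N c_i B_i(x) = 0 for every x in the closed interval [x_0, x_N], then c_i = 0 for all i = 1, …, N. (In other words, the family of restrictions of B_1, …, B_N to [x_0, x_N] is linearly independent over ℝ.) -/
/-!
Descending induction on the index. On the open knot interval `(x i, x (i+1))` every `B j` with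
`j < i` vanishes and `B i` is positive, while the coefficients with `j > i` are already known to
vanish; evaluating the relation at a point of that interval therefore isolates `c i`.
-/

lemma max_sub_zero_pow_eq_zero {a t : ℝ} {d : ℕ} (hd : d ≠ 0) (h : a ≤ t) :
    max (a - t) 0 ^ d = 0 := by
  rw [max_eq_right (sub_nonpos.mpr h), zero_pow hd]

lemma max_sub_zero_pow_pos {a t : ℝ} (d : ℕ) (h : t < a) : 0 < max (a - t) 0 ^ d :=
  pow_pos (lt_max_of_lt_left (sub_pos.mpr h)) d

lemma sum_mul_max_sub_zero_pow_eq_single {N d : ℕ} (hd : d ≠ 0) {x : Fin (N + 1) → ℝ}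
    (hx : Monotone x) {c : Fin N → ℝ} {i : Fin N} (hc : ∀ j, i < j → c j = 0) {t : ℝ}
    (ht : x i.castSucc ≤ t) :
    ∑ j : Fin N, c j * max (x j.succ - t) 0 ^ d = c i * max (x i.succ - t) 0 ^ d := by
  refine Finset.sum_eq_single_of_mem i (Finset.mem_univ i) fun j _ hji => ?_
  rcases hji.lt_or_gt with hj | hj
  · have hxj : x j.succ ≤ x i.castSucc := hx (Fin.succ_le_castSucc_iff.mpr hj)
    rw [max_sub_zero_pow_eq_zero hd (hxj.trans ht), mul_zero]
  · rw [hc j hj, zero_mul]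

theorem stmt_0_general (d N : ℕ) (hd : 1 ≤ d)
    (x : Fin (N + 1) → ℝ) (hx : StrictMono x)
    (c : Fin N → ℝ)
    (h : ∀ t ∈ Set.Icc (x 0) (x (Fin.last N)),
      ∑ i : Fin N, c i * (max (x i.succ - t) 0) ^ d = 0) :
    ∀ i, c i = 0 := by
  intro i
  induction i using WellFoundedGT.induction with
  | ind i ih =>
    obtain ⟨t, hleft, hright⟩ := exists_between (hx (Fin.castSucc_lt_succ (i := i)))
    have ht : t ∈ Set.Icc (x 0) (x (Fin.last N)) :=
      ⟨(hx.monotone (Fin.zero_le _)).trans hleft.le,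
        hright.le.trans (hx.monotone (Fin.le_last _))⟩
    have hsum := h t ht
    rw [sum_mul_max_sub_zero_pow_eq_single (by omega) hx.monotone ih hleft.le] at hsum
    exact (mul_eq_zero.mp hsum).resolve_right (max_sub_zero_pow_pos d hright).ne'

/-- Linear independence on `[x 0, x (Fin.last N)]` of the reflected truncated powers
`B i (t) = (max (x (i+1) - t) 0)^d`, `i = 1, …, N` (paper's Lemma 3.1). -/
theorem stmt_0 (d N : ℕ) (hd : 1 ≤ d) (hN : 1 ≤ N)
    (x : Fin (N + 1) → ℝ) (hx : StrictMono x)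
    (c : Fin N → ℝ)
    (h : ∀ t ∈ Set.Icc (x 0) (x (Fin.last N)),
      ∑ i : Fin N, c i * (max (x i.succ - t) 0) ^ d = 0) :
    ∀ i, c i = 0 :=
  stmt_0_general d N hd x hx c h
end

section
/- Let d ≥ 1 be a natural number, a ∈ ℝ, m ≥ 1, let N_1, …, N_m : ℝ → ℝ be functions that are linearly independent over ℝ, and let b_1, …, b_m be real numbers. Define F : ℝ × ℝ → ℝ by F(x, y) = Σ_{j=1}^m b_j N_j(x) · (max (y − a) 0)^d. If for every x ∈ ℝ the function y ↦ F(x, y) is d-times continuously differentiable at y = a (ContDiffAt ℝ d (fun y => F (x, y)) a), then b_j = 0 for all j = 1, …, m. -/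
/-!
Write `(y - a)₊^d` for the truncated power. Differentiating `(y - a)₊^(n+1)` gives
`(n + 1) (y - a)₊^n` as long as `n ≥ 1`, so `d - 1` differentiations turn a `C^d` germ
`c (y - a)₊^d` into a `C^1` multiple of `(y - a)₊`, which has a corner at `a` unless `c = 0`.
Applied for each `x` to the coefficient `∑ⱼ bⱼ Nⱼ(x)` of `(y - a)₊^d` in `F(x, y)`, this gives
`∑ⱼ bⱼ Nⱼ = 0`, and linear independence of the `Nⱼ` finishes the proof.
-/

open Filter Asymptotics

noncomputable section

def truncPow (a : ℝ) (n : ℕ) (y : ℝ) : ℝ :=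
  max (y - a) 0 ^ n

lemma ContDiffAt.of_const_mul {𝕜 : Type*} [NontriviallyNormedField 𝕜] {f : 𝕜 → 𝕜} {c x : 𝕜}
    {n : WithTop ℕ∞} (hc : c ≠ 0) (h : ContDiffAt 𝕜 n (fun y => c * f y) x) :
    ContDiffAt 𝕜 n f x := by
  simpa [← mul_assoc, inv_mul_cancel₀ hc] using (contDiffAt_const (c := c⁻¹)).mul h

lemma not_differentiableAt_truncPow_one (a : ℝ) : ¬ DifferentiableAt ℝ (truncPow a 1) a := by
  intro h
  have habs : DifferentiableAt ℝ (fun y => |y - a|) a := by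
    have : (fun y => |y - a|) = fun y => 2 * truncPow a 1 y - (y - a) := by
      funext y
      rcases le_total (y - a) 0 with hy | hy
      · simp [truncPow, abs_of_nonpos, hy]
      · simp [truncPow, abs_of_nonneg, hy]; ring
    rw [this]
    fun_prop
  rw [differentiableAt_comp_sub_const, sub_self] at habs
  exact not_differentiableAt_abs_zero habs

lemma hasDerivAt_truncPow_succ (a : ℝ) {n : ℕ} (hn : n ≠ 0) (y : ℝ) :
    HasDerivAt (truncPow a (n + 1)) ((n + 1) * truncPow a n y) y := by
  rcases lt_trichotomy y a with hy | rfl | hy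
  · have hzero : truncPow a (n + 1) =ᶠ[nhds y] fun _ => 0 := by
      filter_upwards [Iio_mem_nhds hy] with z hz
      simp [truncPow, (sub_neg.2 (Set.mem_Iio.1 hz)).le]
    refine ((hasDerivAt_const y (0 : ℝ)).congr_of_eventuallyEq hzero).congr_deriv ?_
    simp [truncPow, (sub_neg.2 hy).le, hn]
  · -- the corner is flattened: `|(h)₊^(n+1)| ≤ |h|^(n+1) = o(h)`
    rw [hasDerivAt_iff_isLittleO_nhds_zero]
    refine IsBigO.trans_isLittleO (g := fun h : ℝ => h ^ (n + 1)) ?_ (isLittleO_pow_id (by omega))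
    refine IsBigO.of_bound 1 (Eventually.of_forall fun h => ?_)
    simp only [truncPow, add_sub_cancel_left, sub_self, max_self, zero_pow hn, mul_zero, smul_zero,
      sub_zero, norm_pow, Real.norm_eq_abs, one_mul]
    rcases le_total h 0 with h0 | h0
    · simp [h0, hn]
    · simp [h0, abs_of_nonneg h0]
  · have hpoly : truncPow a (n + 1) =ᶠ[nhds y] fun z => (z - a) ^ (n + 1) := by
      filter_upwards [Ioi_mem_nhds hy] with z hz
      simp [truncPow, (sub_pos.2 (Set.mem_Ioi.1 hz)).le]
    refine ((((hasDerivAt_id y).sub_const a).pow (n + 1)).congr_of_eventuallyEq hpoly).congr_deriv ?_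
    simp [truncPow, (sub_pos.2 hy).le]

lemma deriv_truncPow_succ (a : ℝ) {n : ℕ} (hn : n ≠ 0) :
    deriv (truncPow a (n + 1)) = fun y => (n + 1) * truncPow a n y :=
  funext fun y => (hasDerivAt_truncPow_succ a hn y).deriv

lemma not_contDiffAt_truncPow (a : ℝ) {n : ℕ} (hn : n ≠ 0) :
    ¬ ContDiffAt ℝ n (truncPow a n) a := by
  induction n with
  | zero => exact absurd rfl hn
  | succ n ih =>
    intro h
    rcases eq_or_ne n 0 with rfl | hn0
    · exact not_differentiableAt_truncPow_one a (h.differentiableAt one_ne_zero)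
    have hderiv : ContDiffAt ℝ n (fun y => ((n : ℝ) + 1) * truncPow a n y) a := by
      simpa [deriv_truncPow_succ a hn0] using h.derivWithin (m := n) (by norm_cast)
    exact ih hn0 (hderiv.of_const_mul (by positivity))

lemma eq_zero_of_contDiffAt_mul_truncPow {a c : ℝ} {d : ℕ} (hd : d ≠ 0)
    (h : ContDiffAt ℝ d (fun y => c * truncPow a d y) a) : c = 0 := by
  by_contra hc
  exact not_contDiffAt_truncPow a hd (h.of_const_mul hc)

end

theorem stmt_5_general (d : ℕ) (hd : 1 ≤ d) (a : ℝ) (m : ℕ)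
    (N : Fin m → ℝ → ℝ) (hN : LinearIndependent ℝ N)
    (b : Fin m → ℝ) (F : ℝ × ℝ → ℝ)
    (hF : ∀ x y : ℝ, F (x, y) = ∑ j : Fin m, b j * N j x * (max (y - a) 0) ^ d)
    (h : ∀ x : ℝ, ContDiffAt ℝ (d : ℕ) (fun y => F (x, y)) a) :
    ∀ j, b j = 0 := by
  have hcoeff : ∀ x, ∑ j, b j * N j x = 0 := fun x => by
    refine eq_zero_of_contDiffAt_mul_truncPow (a := a) (Nat.one_le_iff_ne_zero.mp hd) ?_
    convert h x using 2 with y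
    rw [hF, Finset.sum_mul, truncPow]
  have hsum : ∑ j, b j • N j = 0 := funext fun x => by simpa [Finset.sum_apply] using hcoeff x
  exact Fintype.linearIndependent_iff.mp hN b hsum

/-- Steps 1–2 of the paper's Theorem 3.1: if
`F (x, y) = ∑ j, b j * N j x * (max (y - a) 0)^d` with the `N j` linearly independent,
and `y ↦ F (x, y)` is `C^d` at `a` for every `x`, then all `b j` vanish. -/
theorem stmt_5 (d : ℕ) (hd : 1 ≤ d) (a : ℝ) (m : ℕ) (hm : 1 ≤ m)
    (N : Fin m → ℝ → ℝ) (hN : LinearIndependent ℝ N)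
    (b : Fin m → ℝ) (F : ℝ × ℝ → ℝ)
    (hF : ∀ x y : ℝ, F (x, y) = ∑ j : Fin m, b j * N j x * (max (y - a) 0) ^ d)
    (h : ∀ x : ℝ, ContDiffAt ℝ (d : ℕ) (fun y => F (x, y)) a) :
    ∀ j, b j = 0 :=
  stmt_5_general d hd a m N hN b F hF h
end
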